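/- arXiv:1010.3636 — 5 statements merged into one kernel-verified Lean document; each statement's English description precedes it below -/
import Mathlib

section
/- The operator A on H = H_1 × H_2 defined by A(u,v) = (A_1 u + C(C* u + A_2^{1/2} v), A_2^{1/2}(C* u + A_2^{1/2} v)) with domain D(A) = {(u,v) ∈ H_{1,1} × H_{2,1/2} : C* u + A_2^{1/2} v ∈ H_{2,1/2}} satisfies the quadratic form identity ⟨A(x,y), (x,y)⟩ = ‖A_1^{1/2} x‖² + ‖A_2^{1/2} y + C* x‖² for all (x,y) ∈ H_{1,1} × H_{2,1}; in particular A is symmetric and strictly positive on nonzero elements. -/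
open scoped RealInnerProductSpace

/- Statement 2: the quadratic form identity
   ⟨A(x,y),(x,y)⟩ = ‖A₁^{1/2}x‖² + ‖A₂^{1/2}y + C*x‖²
   for A(u,v) = (A₁u + C(C*u + A₂^{1/2}v), A₂^{1/2}(C*u + A₂^{1/2}v));
   in particular A is symmetric and strictly positive on nonzero elements.
   The (possibly unbounded) operators are modelled as linear maps with the
   natural adjointness/positivity hypotheses. -/
theorem stmt2 {H1 H2 : Type*}
    [NormedAddCommGroup H1] [InnerProductSpace ℝ H1] [CompleteSpace H1]
    [NormedAddCommGroup H2] [InnerProductSpace ℝ H2] [CompleteSpace H2]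
    (A1 sqrtA1 : H1 →ₗ[ℝ] H1) (sqrtA2 : H2 →ₗ[ℝ] H2)
    (C : H2 →ₗ[ℝ] H1) (Cstar : H1 →ₗ[ℝ] H2)
    (hA1 : ∀ x : H1, ⟪A1 x, x⟫ = ‖sqrtA1 x‖ ^ 2)
    (hA1sym : ∀ x x' : H1, ⟪A1 x, x'⟫ = ⟪x, A1 x'⟫)
    (hadj : ∀ (z : H2) (x : H1), ⟪C z, x⟫ = ⟪z, Cstar x⟫)
    (hsqrtA2 : ∀ w y : H2, ⟪sqrtA2 w, y⟫ = ⟪w, sqrtA2 y⟫)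
    (hA1pos : ∀ x : H1, x ≠ 0 → sqrtA1 x ≠ 0)
    (hA2pos : ∀ y : H2, y ≠ 0 → sqrtA2 y ≠ 0) :
    (∀ (x : H1) (y : H2),
        ⟪A1 x + C (Cstar x + sqrtA2 y), x⟫ + ⟪sqrtA2 (Cstar x + sqrtA2 y), y⟫
          = ‖sqrtA1 x‖ ^ 2 + ‖sqrtA2 y + Cstar x‖ ^ 2) ∧
    (∀ (u x : H1) (v y : H2),
        ⟪A1 u + C (Cstar u + sqrtA2 v), x⟫ + ⟪sqrtA2 (Cstar u + sqrtA2 v), y⟫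
          = ⟪u, A1 x + C (Cstar x + sqrtA2 y)⟫ + ⟪v, sqrtA2 (Cstar x + sqrtA2 y)⟫) ∧
    (∀ (x : H1) (y : H2), ¬(x = 0 ∧ y = 0) →
        0 < ⟪A1 x + C (Cstar x + sqrtA2 y), x⟫ + ⟪sqrtA2 (Cstar x + sqrtA2 y), y⟫) := by
  have key : ∀ (x : H1) (y : H2),
      ⟪A1 x + C (Cstar x + sqrtA2 y), x⟫ + ⟪sqrtA2 (Cstar x + sqrtA2 y), y⟫
        = ‖sqrtA1 x‖ ^ 2 + ‖sqrtA2 y + Cstar x‖ ^ 2 := by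
    intro x y
    have h1 : ⟪C (Cstar x + sqrtA2 y), x⟫ = ⟪Cstar x + sqrtA2 y, Cstar x⟫ := hadj _ _
    have h2 : ⟪sqrtA2 (Cstar x + sqrtA2 y), y⟫ = ⟪Cstar x + sqrtA2 y, sqrtA2 y⟫ :=
      hsqrtA2 _ _
    have h3 : ⟪Cstar x + sqrtA2 y, Cstar x⟫ + ⟪Cstar x + sqrtA2 y, sqrtA2 y⟫
        = ‖sqrtA2 y + Cstar x‖ ^ 2 := by
      rw [← inner_add_right, ← real_inner_self_eq_norm_sq]
      congr 1 <;> abel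
    rw [inner_add_left, hA1, h1, h2, add_assoc, h3]
  refine ⟨key, ?_, ?_⟩
  · intro u x v y
    have e1 : ⟪u, C (Cstar x + sqrtA2 y)⟫ = ⟪Cstar x + sqrtA2 y, Cstar u⟫ := by
      rw [real_inner_comm, hadj]
    have e2 : ⟪v, sqrtA2 (Cstar x + sqrtA2 y)⟫ = ⟪Cstar x + sqrtA2 y, sqrtA2 v⟫ := by
      rw [real_inner_comm, hsqrtA2]
    rw [inner_add_left, inner_add_right, hA1sym, hadj, hsqrtA2, e1, e2,
      add_assoc, add_assoc, ← inner_add_right, ← inner_add_right,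
      real_inner_comm (Cstar u + sqrtA2 v)]
  · intro x y hxy
    rw [key]
    rcases eq_or_ne x 0 with hx | hx
    · have hy : y ≠ 0 := fun hy => hxy ⟨hx, hy⟩
      have : sqrtA2 y + Cstar x ≠ 0 := by
        simp [hx, hA2pos y hy]
      exact add_pos_of_nonneg_of_pos (sq_nonneg _) (pow_pos (norm_pos_iff.mpr this) 2)
    · have : sqrtA1 x ≠ 0 := hA1pos x hx
      exact add_pos_of_pos_of_nonneg (pow_pos (norm_pos_iff.mpr this) 2) (sq_nonneg _)
end

section
/- For every real λ > 0, the operator λ² I + A_1 + λ² C (λ² + A_2)^{-1} C* is boundedly invertible from H_{1,1/2} onto H_{1,-1/2}; its inverse is obtained via the Lax–Milgram theorem applied to the coercive sesquilinear form Λ(x,ζ) = λ²⟨x,ζ⟩ + ⟨A_1^{1/2} x, A_1^{1/2} ζ⟩ + ⟨λ(λ²+A_2)^{-1/2} C* x, λ(λ²+A_2)^{-1/2} C* ζ⟩ on H_{1,1/2}. -/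
open scoped RealInnerProductSpace

theorem stmt5 {V H1 H2 : Type*}
    [NormedAddCommGroup V] [InnerProductSpace ℝ V] [CompleteSpace V]
    [NormedAddCommGroup H1] [InnerProductSpace ℝ H1] [CompleteSpace H1]
    [NormedAddCommGroup H2] [InnerProductSpace ℝ H2] [CompleteSpace H2]
    (lam : ℝ) (hlam : 0 < lam)
    (ι : V →L[ℝ] H1) (J : V →L[ℝ] H1) (T : V →L[ℝ] H2)
    (hJ : ∀ x : V, ‖J x‖ = ‖x‖) :
    ∀ f : V →L[ℝ] ℝ, ∃! x : V, ∀ ζ : V,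
      lam ^ 2 * ⟪ι x, ι ζ⟫ + ⟪J x, J ζ⟫ + ⟪T x, T ζ⟫ = f ζ := by
  intro f
  set S : V →L[ℝ] V :=
    lam ^ 2 • (ContinuousLinearMap.adjoint ι).comp ι
      + (ContinuousLinearMap.adjoint J).comp J
      + (ContinuousLinearMap.adjoint T).comp T with hS
  set B : V →L[ℝ] V →L[ℝ] ℝ := (innerSL ℝ).comp S with hB
  have hBval : ∀ x ζ : V,
      B x ζ = lam ^ 2 * ⟪ι x, ι ζ⟫ + ⟪J x, J ζ⟫ + ⟪T x, T ζ⟫ := by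
    intro x ζ
    simp [hB, hS, inner_add_left, inner_smul_left, real_inner_smul_left,
      ContinuousLinearMap.adjoint_inner_left]
  have coercive : IsCoercive B := by
    refine ⟨1, one_pos, fun u => ?_⟩
    have : B u u = lam ^ 2 * ⟪ι u, ι u⟫ + ⟪J u, J u⟫ + ⟪T u, T u⟫ := hBval u u
    rw [this]
    have h1 : (0 : ℝ) ≤ lam ^ 2 * ⟪ι u, ι u⟫ :=
      mul_nonneg (sq_nonneg _) real_inner_self_nonneg
    have h2 : (0 : ℝ) ≤ ⟪T u, T u⟫ := real_inner_self_nonneg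
    have h3 : ⟪J u, J u⟫ = ‖u‖ * ‖u‖ := by
      rw [real_inner_self_eq_norm_mul_norm, hJ]
    nlinarith
  set y : V := (InnerProductSpace.toDual ℝ V).symm f with hy
  have hyf : ∀ w : V, ⟪y, w⟫ = f w := fun w =>
    InnerProductSpace.toDual_symm_apply
  refine ⟨coercive.continuousLinearEquivOfBilin.symm y, fun ζ => ?_, fun x' hx' => ?_⟩
  · rw [← hBval, ← hyf ζ]
    rw [← coercive.continuousLinearEquivOfBilin_apply
      (coercive.continuousLinearEquivOfBilin.symm y) ζ]
    simp
  · have : y = coercive.continuousLinearEquivOfBilin x' := by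
      apply coercive.unique_continuousLinearEquivOfBilin
      intro w
      rw [hyf, hBval]
      exact (hx' w).symm
    rw [this]
    simp
end

section
/- With A the 2×2 block operator A = [[A_1 + CC*, C A_2^{1/2}],[A_2^{1/2} C*, A_2]], for λ > 0 the resolvent (λ² + A)^{-1} is given blockwise by [[Γ, -Γ C A_2^{1/2}(λ²+A_2)^{-1}], [-(λ²+A_2)^{-1} A_2^{1/2} C* Γ, (λ²+A_2)^{-1}(I + A_2^{1/2} C* Γ C A_2^{1/2} (λ²+A_2)^{-1})]], where Γ = [λ² + A_1 + λ² C(λ²+A_2)^{-1} C*]^{-1}. Consequently the transfer function equals G(λ) = λ B*[λ² + A_1 + λ² C (λ²+A_2)^{-1} C*]^{-1} B. -/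
/- Statement 7: the block formula for (λ²+A)^{-1} with
   A(u,v) = (A₁u + C(C*u + A₂^{1/2}v), A₂^{1/2}(C*u + A₂^{1/2}v)), where
   Γ = [λ² + A₁ + λ²C(λ²+A₂)^{-1}C*]^{-1} and R₂ = (λ²+A₂)^{-1};
   consequently the transfer function is G(λ)k = λB*Γ(Bk). -/
theorem stmt7 {H1 H2 U : Type*}
    [NormedAddCommGroup H1] [InnerProductSpace ℝ H1] [CompleteSpace H1]
    [NormedAddCommGroup H2] [InnerProductSpace ℝ H2] [CompleteSpace H2]
    [NormedAddCommGroup U] [InnerProductSpace ℝ U] [CompleteSpace U]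
    (A1 : H1 →ₗ[ℝ] H1) (A2 sqrtA2 R2 : H2 →ₗ[ℝ] H2)
    (C : H2 →ₗ[ℝ] H1) (Cstar : H1 →ₗ[ℝ] H2)
    (Γ : H1 →ₗ[ℝ] H1) (B : U →ₗ[ℝ] H1) (Bstar : H1 →ₗ[ℝ] U)
    (lam : ℝ) (hlam : 0 < lam)
    (hA2 : ∀ y : H2, sqrtA2 (sqrtA2 y) = A2 y)
    (hR2a : ∀ g : H2, lam ^ 2 • R2 g + A2 (R2 g) = g)
    (hR2b : ∀ g : H2, R2 (lam ^ 2 • g + A2 g) = g)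
    (hΓa : ∀ f : H1, lam ^ 2 • Γ f + A1 (Γ f) + lam ^ 2 • C (R2 (Cstar (Γ f))) = f)
    (hΓb : ∀ f : H1, Γ (lam ^ 2 • f + A1 f + lam ^ 2 • C (R2 (Cstar f))) = f) :
    (∀ (f : H1) (g : H2),
      (fun (x : H1) (y : H2) =>
        (lam ^ 2 • x + A1 x + C (Cstar x + sqrtA2 y) = f ∧
         lam ^ 2 • y + sqrtA2 (Cstar x + sqrtA2 y) = g))
      (Γ f - Γ (C (sqrtA2 (R2 g))))
      (R2 g - R2 (sqrtA2 (Cstar (Γ f)))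
         + R2 (sqrtA2 (Cstar (Γ (C (sqrtA2 (R2 g)))))))) ∧
    (∀ (k : U) (x : H1) (y : H2),
      (lam ^ 2 • x + A1 x + C (Cstar x + sqrtA2 y) = B k ∧
       lam ^ 2 • y + sqrtA2 (Cstar x + sqrtA2 y) = 0) →
      lam • Bstar x = lam • Bstar (Γ (B k))) := by
  -- commutation of sqrtA2 with A2
  have hcommA : ∀ z : H2, A2 (sqrtA2 z) = sqrtA2 (A2 z) := by
    intro z
    rw [← hA2 (sqrtA2 z), hA2 z]
  -- commutation of sqrtA2 with R2
  have comm : ∀ h : H2, sqrtA2 (R2 h) = R2 (sqrtA2 h) := by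
    intro h
    conv_lhs => rw [← hR2b (sqrtA2 (R2 h))]
    congr 1
    rw [hcommA, ← map_smul, ← map_add, hR2a]
  -- key identity: sqrtA2 ∘ R2 ∘ sqrtA2 = id - lam² R2
  have key : ∀ h : H2, sqrtA2 (R2 (sqrtA2 h)) = h - lam ^ 2 • R2 h := by
    intro h
    rw [comm, hA2]
    have := hR2b h
    rw [map_add, map_smul] at this
    exact eq_sub_iff_add_eq'.mpr this
  constructor
  · intro f g
    set u1 := Γ f with hu1
    set u2 := Γ (C (sqrtA2 (R2 g))) with hu2
    set x := u1 - u2 with hx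
    set y := R2 g - R2 (sqrtA2 (Cstar u1)) + R2 (sqrtA2 (Cstar u2)) with hy
    have harg : Cstar x + sqrtA2 y
        = sqrtA2 (R2 g) + (lam ^ 2 • R2 (Cstar u1) - lam ^ 2 • R2 (Cstar u2)) := by
      rw [hx, hy]
      rw [map_sub, map_add, map_sub, key (Cstar u1), key (Cstar u2)]
      abel
    refine ⟨?_, ?_⟩
    · rw [harg]
      have e1 := hΓa f
      have e2 := hΓa (C (sqrtA2 (R2 g)))
      rw [← hu1] at e1
      rw [← hu2] at e2
      have expand : lam ^ 2 • x + A1 x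
          + C (sqrtA2 (R2 g) + (lam ^ 2 • R2 (Cstar u1) - lam ^ 2 • R2 (Cstar u2)))
          = (lam ^ 2 • u1 + A1 u1 + lam ^ 2 • C (R2 (Cstar u1)))
            - (lam ^ 2 • u2 + A1 u2 + lam ^ 2 • C (R2 (Cstar u2)))
            + C (sqrtA2 (R2 g)) := by
        rw [hx]
        simp only [map_sub, map_add, map_smul, smul_sub]
        abel
      rw [expand, e1, e2]
      abel
    · rw [harg, hy]
      rw [map_add, map_sub, hA2, map_smul, map_smul, comm (Cstar u1), comm (Cstar u2)]
      linear_combination (norm := module) hR2a g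
  · rintro k x y ⟨h1, h2⟩
    have hy : y = -(R2 (sqrtA2 (Cstar x))) := by
      have h3 : lam ^ 2 • y + A2 y = -(sqrtA2 (Cstar x)) := by
        rw [map_add, hA2] at h2
        linear_combination (norm := abel) h2
      calc y = R2 (lam ^ 2 • y + A2 y) := (hR2b y).symm
        _ = -(R2 (sqrtA2 (Cstar x))) := by rw [h3, map_neg]
    have harg : Cstar x + sqrtA2 y = lam ^ 2 • R2 (Cstar x) := by
      rw [hy, map_neg, key (Cstar x)]
      abel
    rw [harg, map_smul] at h1
    have hx : x = Γ (B k) := by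
      rw [← h1]
      exact (hΓb x).symm
    rw [hx]
end

section
/- Assume there exists δ ∈ [0, 1/2) such that |⟨x, Cy⟩| ≤ δ(‖A_1^{1/2} x‖² + ‖y‖² + ‖C* x‖²) for all (x,y) ∈ H_{1,1} × H_{2,1}. Then the energy norms ‖A_1^{1/2} u‖² + ‖A_2^{1/2} v + C* u‖² and ‖A_1^{1/2} u‖² + ‖A_2^{1/2} v‖² + ‖C* u‖² are equivalent: there exist constants 0 < c ≤ C such that c(‖A_1^{1/2}u‖² + ‖A_2^{1/2}v‖² + ‖C* u‖²) ≤ ‖A_1^{1/2} u‖² + ‖A_2^{1/2} v + C* u‖² ≤ C(‖A_1^{1/2}u‖² + ‖A_2^{1/2}v‖² + ‖C* u‖²). -/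
open scoped RealInnerProductSpace

/- Statement 8: under the smallness condition
   |⟨x,Cy⟩| ≤ δ(‖A₁^{1/2}x‖² + ‖y‖² + ‖C*x‖²) with δ ∈ [0,1/2),
   the energies ‖A₁^{1/2}u‖² + ‖A₂^{1/2}v + C*u‖² and
   ‖A₁^{1/2}u‖² + ‖A₂^{1/2}v‖² + ‖C*u‖² are equivalent. -/
theorem stmt8 {H1 H2 : Type*}
    [NormedAddCommGroup H1] [InnerProductSpace ℝ H1] [CompleteSpace H1]
    [NormedAddCommGroup H2] [InnerProductSpace ℝ H2] [CompleteSpace H2]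
    (sqrtA1 : H1 →ₗ[ℝ] H1) (sqrtA2 : H2 →ₗ[ℝ] H2)
    (C : H2 →ₗ[ℝ] H1) (Cstar : H1 →ₗ[ℝ] H2)
    (hadj : ∀ (x : H1) (y : H2), ⟪x, C y⟫ = ⟪Cstar x, y⟫)
    (δ : ℝ) (hδ0 : 0 ≤ δ) (hδ : δ < 1 / 2)
    (hsmall : ∀ (x : H1) (y : H2),
      |⟪x, C y⟫| ≤ δ * (‖sqrtA1 x‖ ^ 2 + ‖y‖ ^ 2 + ‖Cstar x‖ ^ 2)) :
    ∃ c Cc : ℝ, 0 < c ∧ c ≤ Cc ∧ ∀ (u : H1) (v : H2),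
      c * (‖sqrtA1 u‖ ^ 2 + ‖sqrtA2 v‖ ^ 2 + ‖Cstar u‖ ^ 2)
        ≤ ‖sqrtA1 u‖ ^ 2 + ‖sqrtA2 v + Cstar u‖ ^ 2 ∧
      ‖sqrtA1 u‖ ^ 2 + ‖sqrtA2 v + Cstar u‖ ^ 2
        ≤ Cc * (‖sqrtA1 u‖ ^ 2 + ‖sqrtA2 v‖ ^ 2 + ‖Cstar u‖ ^ 2) := by

  refine ⟨1 - 2 * δ, 1 + 2 * δ, by linarith, by linarith, fun u v => ?_⟩
  have hx : ⟪sqrtA2 v, Cstar u⟫ = ⟪u, C (sqrtA2 v)⟫ := by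
    rw [hadj, real_inner_comm]
  have hexp : ‖sqrtA2 v + Cstar u‖ ^ 2
      = ‖sqrtA2 v‖ ^ 2 + 2 * ⟪u, C (sqrtA2 v)⟫ + ‖Cstar u‖ ^ 2 := by
    rw [← hx]; exact norm_add_sq_real _ _
  have hs := hsmall u (sqrtA2 v)
  have h1 := abs_le.mp hs
  constructor <;> rw [hexp] <;> nlinarith [h1.1, h1.2]
end

section
/- With H_1(λ) = (e^{-λβξ}/(2√(β²+4))) · (e^{r_1(ξ-1)} - e^{r_2(ξ-1)})(e^{r_1 ξ} - e^{r_2 ξ})/(e^{-r_2} - e^{-r_1}), where r_1 = (λ/2)(β+√(β²+4)), r_2 = (λ/2)(β-√(β²+4)), one has for every γ > 0 the uniform bound sup over λ with Re λ = 2γ of |H_1(λ)| ≤ (1/√(β²+4)) · cosh(γ√(β²+4)(1-ξ)) cosh(γ√(β²+4) ξ)/sinh(γ√(β²+4)). -/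
/-!
Put `s = √(β² + 4)` and `μ = λ s / 2`, so that `Re μ = γ s`. Pulling `e^{λβx/2}` out of each
difference `e^{r₁x} - e^{r₂x}` turns it into `2 e^{λβx/2} sinh(μx)`, and the exponential prefactors
cancel exactly, leaving `H₁(λ) = sinh(μ(ξ - 1)) sinh(μξ) / (s sinh μ)`. The bound then follows
from `sinh(Re z) ≤ |sinh z| ≤ cosh(Re z)`, i.e. the triangle inequality for `e^z - e^{-z}`.
-/

namespace Complex

theorem exp_add_sub_exp_sub (u v : ℂ) : exp (u + v) - exp (u - v) = 2 * exp u * sinh v := by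
  rw [sinh, exp_add, exp_sub, exp_neg]
  field_simp

theorem norm_sinh_le_cosh_re (z : ℂ) : ‖sinh z‖ ≤ Real.cosh z.re :=
  calc ‖sinh z‖ = ‖exp z - exp (-z)‖ / 2 := by rw [sinh, norm_div, Complex.norm_two]
    _ ≤ (‖exp z‖ + ‖exp (-z)‖) / 2 := by gcongr; exact norm_sub_le _ _
    _ = Real.cosh z.re := by rw [norm_exp, norm_exp, neg_re, Real.cosh_eq]

theorem sinh_re_le_norm_sinh (z : ℂ) : Real.sinh z.re ≤ ‖sinh z‖ :=
  calc Real.sinh z.re = (‖exp z‖ - ‖exp (-z)‖) / 2 := by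
        rw [norm_exp, norm_exp, neg_re, Real.sinh_eq]
    _ ≤ ‖exp z - exp (-z)‖ / 2 := by gcongr; exact norm_sub_norm_le _ _
    _ = ‖sinh z‖ := by rw [sinh, norm_div, Complex.norm_two]

end Complex

open Complex

theorem transfer_ratio_eq_sinh (lam b c x : ℂ) :
    exp (-(lam * b * x)) / (2 * c)
        * ((exp (lam / 2 * (b + c) * (x - 1)) - exp (lam / 2 * (b - c) * (x - 1)))
          * (exp (lam / 2 * (b + c) * x) - exp (lam / 2 * (b - c) * x))
          / (exp (-(lam / 2 * (b - c))) - exp (-(lam / 2 * (b + c)))))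
      = 1 / c * (sinh (lam * c / 2 * (x - 1)) * sinh (lam * c / 2 * x) / sinh (lam * c / 2)) := by
  have hdiff : ∀ u u' w v : ℂ, u = w + v → u' = w - v → exp u - exp u' = 2 * exp w * sinh v := by
    rintro u u' w v rfl rfl
    exact exp_add_sub_exp_sub w v
  have hprefactor : exp (-(lam * b * x)) * (exp (lam * b / 2 * (x - 1)) * exp (lam * b / 2 * x))
      = exp (-(lam * b / 2)) := by
    rw [← exp_add, ← exp_add]
    ring_nf
  rw [hdiff _ _ (lam * b / 2 * (x - 1)) (lam * c / 2 * (x - 1)) (by ring) (by ring),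
    hdiff _ _ (lam * b / 2 * x) (lam * c / 2 * x) (by ring) (by ring),
    hdiff _ _ (-(lam * b / 2)) (lam * c / 2) (by ring) (by ring)]
  calc _ = exp (-(lam * b * x)) * (exp (lam * b / 2 * (x - 1)) * exp (lam * b / 2 * x))
          / exp (-(lam * b / 2))
        * (1 / c * (sinh (lam * c / 2 * (x - 1)) * sinh (lam * c / 2 * x) / sinh (lam * c / 2))) := by
          ring
    _ = _ := by rw [hprefactor, div_self (exp_ne_zero _), one_mul]

theorem norm_sinh_mul_sinh_div_sinh_le (μ : ℂ) (x : ℝ) (hμ : 0 < μ.re) :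
    ‖sinh (μ * (x - 1)) * sinh (μ * x) / sinh μ‖
      ≤ Real.cosh (μ.re * (1 - x)) * Real.cosh (μ.re * x) / Real.sinh μ.re := by
  have hre_sub : (μ * (x - 1)).re = -(μ.re * (1 - x)) := by
    simp only [mul_re, sub_re, ofReal_re, one_re, sub_im, ofReal_im, one_im, sub_self, mul_zero,
      sub_zero]
    ring
  have hre : (μ * x).re = μ.re * x := by simp
  rw [norm_div, norm_mul, ← Real.cosh_neg (μ.re * (1 - x)), ← hre_sub, ← hre]
  have hsinh : 0 < Real.sinh μ.re := Real.sinh_pos_iff.mpr hμ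
  gcongr
  · exact norm_sinh_le_cosh_re _
  · exact norm_sinh_le_cosh_re _
  · exact sinh_re_le_norm_sinh _

theorem stmt12_general (β ξ γ : ℝ) (hγ : 0 < γ) :
    ∀ lam : ℂ, lam.re = 2 * γ →
      Norm.norm
        (Complex.exp (-(lam * (β : ℂ) * (ξ : ℂ)))
            / (2 * ((Real.sqrt (β ^ 2 + 4) : ℝ) : ℂ))
          * ((Complex.exp ((lam / 2) * ((β : ℂ) + (Real.sqrt (β ^ 2 + 4) : ℝ)) * ((ξ : ℂ) - 1))
                - Complex.exp ((lam / 2) * ((β : ℂ) - (Real.sqrt (β ^ 2 + 4) : ℝ)) * ((ξ : ℂ) - 1)))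
              * (Complex.exp ((lam / 2) * ((β : ℂ) + (Real.sqrt (β ^ 2 + 4) : ℝ)) * (ξ : ℂ))
                - Complex.exp ((lam / 2) * ((β : ℂ) - (Real.sqrt (β ^ 2 + 4) : ℝ)) * (ξ : ℂ)))
              / (Complex.exp (-((lam / 2) * ((β : ℂ) - (Real.sqrt (β ^ 2 + 4) : ℝ))))
                - Complex.exp (-((lam / 2) * ((β : ℂ) + (Real.sqrt (β ^ 2 + 4) : ℝ)))))))
      ≤ (1 / Real.sqrt (β ^ 2 + 4))
          * (Real.cosh (γ * Real.sqrt (β ^ 2 + 4) * (1 - ξ))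
              * Real.cosh (γ * Real.sqrt (β ^ 2 + 4) * ξ)
              / Real.sinh (γ * Real.sqrt (β ^ 2 + 4))) := by
  intro lam hre
  set s := Real.sqrt (β ^ 2 + 4)
  have hs : 0 < s := Real.sqrt_pos.mpr (by positivity)
  have hμ : (lam * s / 2).re = γ * s := by
    simp only [div_ofNat_re, mul_re, hre, ofReal_re, ofReal_im, mul_zero, sub_zero]
    ring
  rw [transfer_ratio_eq_sinh, norm_mul, norm_div, norm_one, norm_real, Real.norm_eq_abs,
    abs_of_pos hs, ← hμ]
  gcongr
  exact norm_sinh_mul_sinh_div_sinh_le _ ξ (by rw [hμ]; positivity)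

theorem stmt12 (β ξ γ : ℝ) (hβ : 0 < β) (hξ : ξ ∈ Set.Ioo (0 : ℝ) 1) (hγ : 0 < γ) :
    ∀ lam : ℂ, lam.re = 2 * γ →
      Norm.norm
        (Complex.exp (-(lam * (β : ℂ) * (ξ : ℂ)))
            / (2 * ((Real.sqrt (β ^ 2 + 4) : ℝ) : ℂ))
          * ((Complex.exp ((lam / 2) * ((β : ℂ) + (Real.sqrt (β ^ 2 + 4) : ℝ)) * ((ξ : ℂ) - 1))
                - Complex.exp ((lam / 2) * ((β : ℂ) - (Real.sqrt (β ^ 2 + 4) : ℝ)) * ((ξ : ℂ) - 1)))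
              * (Complex.exp ((lam / 2) * ((β : ℂ) + (Real.sqrt (β ^ 2 + 4) : ℝ)) * (ξ : ℂ))
                - Complex.exp ((lam / 2) * ((β : ℂ) - (Real.sqrt (β ^ 2 + 4) : ℝ)) * (ξ : ℂ)))
              / (Complex.exp (-((lam / 2) * ((β : ℂ) - (Real.sqrt (β ^ 2 + 4) : ℝ))))
                - Complex.exp (-((lam / 2) * ((β : ℂ) + (Real.sqrt (β ^ 2 + 4) : ℝ)))))))
      ≤ (1 / Real.sqrt (β ^ 2 + 4))
          * (Real.cosh (γ * Real.sqrt (β ^ 2 + 4) * (1 - ξ))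
              * Real.cosh (γ * Real.sqrt (β ^ 2 + 4) * ξ)
              / Real.sinh (γ * Real.sqrt (β ^ 2 + 4))) :=
  stmt12_general β ξ γ hγ
end
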